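/- Let T be a clique tree of a finite simple graph G, rooted at a node C_r, and let D be a minimal dominating set of G. Then the top antichain A(D) satisfies: (i) for any two distinct vertices x, y ∈ A(D), the nodes C(x) and C(y) are incomparable (equivalently, x ∉ Up({y}) and y ∉ Up({x})); (ii) for every vertex z ∈ V_G ∖ Up(A(D)), A(D) ∩ (C(z) ∪ Up({z})) ≠ ∅; and (iii) A(D) dominates Up(A(D)), i.e., Up(A(D)) ⊆ N[A(D)]. -/

import Mathlib

variable {V : Type*}

/-- The closed neighborhood `N[x]` of a vertex. -/
def closedNbhd (G : SimpleGraph V) (x : V) : Set V := insert x (G.neighborSet x)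

/-- `N[S] = ⋃ x ∈ S, N[x]`. -/
def closedNbhdSet (G : SimpleGraph V) (S : Set V) : Set V := ⋃ x ∈ S, closedNbhd G x

/-- `D` is a dominating set: `N[D] = V`. -/
def IsDomSet (G : SimpleGraph V) (D : Set V) : Prop := closedNbhdSet G D = Set.univ

/-- Minimal dominating set: dominating, and no proper subset dominates. -/
def IsMinDomSet (G : SimpleGraph V) (D : Set V) : Prop :=
  IsDomSet G D ∧ ∀ D' : Set V, D' ⊂ D → ¬ IsDomSet G D'

/-- Private neighbors of `x` with respect to `D`: `P(D,x) = {y : N[y] ∩ D = {x}}`. -/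
def privNbrs (G : SimpleGraph V) (D : Set V) (x : V) : Set V :=
  {y | closedNbhd G y ∩ D = {x}}

/-- Irredundant set: every member has a private neighbor. -/
def IsIrredundant (G : SimpleGraph V) (D : Set V) : Prop :=
  ∀ x ∈ D, (privNbrs G D x).Nonempty

/-- Maximal clique. -/
def IsMaxClique (G : SimpleGraph V) (C : Set V) : Prop :=
  G.IsClique C ∧ ∀ D : Set V, G.IsClique D → C ⊆ D → C = D

/-- The type of maximal cliques of `G`. -/
abbrev MaxClique (G : SimpleGraph V) := {C : Set V // IsMaxClique G C}

/-- A clique tree of `G`, rooted at `root`: a rooted tree whose nodes are exactly the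
maximal cliques of `G` (encoded by a parent function from which every node reaches the
root), such that for each vertex `x` the nodes containing `x` induce a connected
subtree of the tree. -/
structure CliqueTree (G : SimpleGraph V) where
  parent : MaxClique G → MaxClique G
  root : MaxClique G
  parent_root : parent root = root
  reaches_root : ∀ C : MaxClique G, ∃ n : ℕ, parent^[n] C = root
  vertex_subtree : ∀ x : V,
    ((SimpleGraph.fromRel fun C C' : MaxClique G => parent C = C').induce
      {C : MaxClique G | x ∈ C.1}).Connected

variable {G : SimpleGraph V}

open Classical in
/-- `f(C) := C ∖ Pa(C)` for non-root `C`, and `f(C_r) := C_r`. -/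
noncomputable def fC (T : CliqueTree G) (C : MaxClique G) : Set V :=
  if C = T.root then C.1 else C.1 \ (T.parent C).1

/-- `IsAnc T A B` : `A` is an ancestor of `B` (i.e. `B ⪯ A`), namely `A` lies on the
path from the root to `B`. -/
def IsAnc (T : CliqueTree G) (A B : MaxClique G) : Prop :=
  ∃ n : ℕ, T.parent^[n] B = A

/-- `V(C) := ⋃_{C' ⪯ C} f(C')`. -/
noncomputable def Vsub (T : CliqueTree G) (C : MaxClique G) : Set V :=
  ⋃ C' ∈ {C' : MaxClique G | IsAnc T C C'}, fC T C'


/-- `Up(S)`: vertices `v` such that `C(v)` is a proper ancestor of some node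
`C(u)`, `u ∈ S`. -/
def UpS (T : CliqueTree G) (Cx : V → MaxClique G) (S : Set V) : Set V :=
  {v | ∃ u ∈ S, IsAnc T (Cx v) (Cx u) ∧ Cx v ≠ Cx u}

/-- The top antichain `A(S)`: vertices `x ∈ S` with `C(x)` maximal (w.r.t. the
ancestor order) among the nodes `C(u)`, `u ∈ S`. -/
def topAC (T : CliqueTree G) (Cx : V → MaxClique G) (S : Set V) : Set V :=
  {x ∈ S | ∀ u ∈ S, IsAnc T (Cx u) (Cx x) → Cx u = Cx x}

/-!
The nodes of `T` containing a vertex `v` form a subtree whose top node is `C(v)`. Hence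
`C(d)` and `C(z)` are comparable whenever `d` dominates `z` (both lie in a common maximal
clique), and `v` belongs to every node on the path from a node containing it up to `C(v)`.
Part (ii) follows by lifting a dominator of `z` to a highest element of `D` above it. For
(iii), let `z ∈ Up(A(D))` and pick a dominator `d` of `z` whose node is highest among all
dominators of `z`. No element of `D` lies weakly above `C(z)`, so every `u ∈ D` with `C(u)`
above `C(d)` sits between `C(d)` and `C(z)`; then `z ∈ C(u)`, so `u` dominates `z` and
`C(u) = C(d)`. Thus `d ∈ A(D)`.
-/

namespace IsAnc

variable {T : CliqueTree G} {A B C : MaxClique G}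

lemma refl (T : CliqueTree G) (A : MaxClique G) : IsAnc T A A := ⟨0, rfl⟩

lemma trans (hAB : IsAnc T A B) (hBC : IsAnc T B C) : IsAnc T A C := by
  obtain ⟨m, rfl⟩ := hAB
  obtain ⟨n, rfl⟩ := hBC
  exact ⟨m + n, Function.iterate_add_apply _ _ _ _⟩

lemma parent (T : CliqueTree G) (C : MaxClique G) : IsAnc T (T.parent C) C := ⟨1, rfl⟩

lemma eq_or_isAnc_parent (h : IsAnc T A C) : A = C ∨ IsAnc T A (T.parent C) := by
  obtain ⟨_ | k, rfl⟩ := h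
  · exact Or.inl rfl
  · exact Or.inr ⟨k, rfl⟩

lemma total (hA : IsAnc T A C) (hB : IsAnc T B C) : IsAnc T A B ∨ IsAnc T B A := by
  obtain ⟨m, rfl⟩ := hA
  obtain ⟨n, rfl⟩ := hB
  rcases le_total m n with h | h
  · exact Or.inr ⟨n - m, by rw [← Function.iterate_add_apply, Nat.sub_add_cancel h]⟩
  · exact Or.inl ⟨m - n, by rw [← Function.iterate_add_apply, Nat.sub_add_cancel h]⟩

end IsAnc

namespace CliqueTree

variable (T : CliqueTree G)

noncomputable def depth (C : MaxClique G) : ℕ := sInf {n | T.parent^[n] C = T.root}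

lemma iterate_parent_depth (C : MaxClique G) : T.parent^[T.depth C] C = T.root :=
  Nat.sInf_mem (T.reaches_root C)

lemma depth_le {C : MaxClique G} {n : ℕ} (h : T.parent^[n] C = T.root) : T.depth C ≤ n :=
  Nat.sInf_le h

lemma iterate_parent_root (n : ℕ) : T.parent^[n] T.root = T.root :=
  Function.iterate_fixed T.parent_root n

lemma depth_eq_zero_iff {C : MaxClique G} : T.depth C = 0 ↔ C = T.root := by
  refine ⟨fun h => ?_, fun h => Nat.le_zero.mp (T.depth_le (n := 0) h)⟩
  simpa [h] using T.iterate_parent_depth C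

lemma depth_iterate_parent (k : ℕ) (C : MaxClique G) :
    T.depth (T.parent^[k] C) = T.depth C - k := by
  apply le_antisymm
  · apply T.depth_le
    rw [← Function.iterate_add_apply,
      show T.depth C - k + k = (T.depth C - k + k - T.depth C) + T.depth C by omega,
      Function.iterate_add_apply, iterate_parent_depth, iterate_parent_root]
  · have : T.depth C ≤ T.depth (T.parent^[k] C) + k := by
      apply T.depth_le
      rw [Function.iterate_add_apply, iterate_parent_depth]
    omega

variable {T} {A B : MaxClique G}

lemma depth_le_of_isAnc (h : IsAnc T A B) : T.depth A ≤ T.depth B := by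
  obtain ⟨k, rfl⟩ := h
  rw [depth_iterate_parent]
  omega

lemma depth_lt_of_isAnc_of_ne (h : IsAnc T A B) (hne : A ≠ B) : T.depth A < T.depth B := by
  obtain ⟨k, rfl⟩ := h
  have hk : k ≠ 0 := by rintro rfl; exact hne rfl
  have hB : T.depth B ≠ 0 := by
    rw [Ne, depth_eq_zero_iff]
    rintro rfl
    exact hne (T.iterate_parent_root k)
  rw [depth_iterate_parent]
  omega

end CliqueTree

lemma IsAnc.antisymm {T : CliqueTree G} {A B : MaxClique G} (hAB : IsAnc T A B)
    (hBA : IsAnc T B A) : A = B := by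
  by_contra hne
  exact (CliqueTree.depth_lt_of_isAnc_of_ne hAB hne).not_ge (CliqueTree.depth_le_of_isAnc hBA)

lemma exists_maxClique_superset {s : Set V} (hs : G.IsClique s) :
    ∃ C : MaxClique G, s ⊆ C.1 := by
  obtain ⟨m, hsm, hm⟩ := zorn_subset_nonempty {t | G.IsClique t}
    (fun c hc hchain _ => ⟨⋃₀ c, (SimpleGraph.isClique_sUnion hchain.directedOn).2 hc,
      fun _ => Set.subset_sUnion_of_mem⟩) s hs
  exact ⟨⟨m, hm.prop, fun t ht hmt => hm.eq_of_subset ht hmt⟩, hsm⟩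

lemma exists_maxClique_mem_of_mem_closedNbhd {d z : V} (h : z ∈ closedNbhd G d) :
    ∃ C : MaxClique G, d ∈ C.1 ∧ z ∈ C.1 := by
  have hpair : G.IsClique {d, z} := SimpleGraph.isClique_pair.2 fun hne =>
    (Set.mem_insert_iff.1 h).resolve_left (Ne.symm hne)
  obtain ⟨C, hC⟩ := exists_maxClique_superset hpair
  exact ⟨C, hC (Set.mem_insert d _), hC (Set.mem_insert_of_mem d rfl)⟩

lemma IsDomSet.exists_mem_closedNbhd {D : Set V} (hD : IsDomSet G D) (z : V) :
    ∃ d ∈ D, z ∈ closedNbhd G d := by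
  have hz : z ∈ closedNbhdSet G D := hD ▸ Set.mem_univ z
  simpa only [closedNbhdSet, Set.mem_iUnion, exists_prop] using hz

namespace CliqueTree

variable {T : CliqueTree G}

lemma fC_subset (C : MaxClique G) : fC T C ⊆ C.1 := by
  unfold fC
  split_ifs
  · exact subset_rfl
  · exact Set.sdiff_subset

variable (T) in
/-- `Cx` is the map `x ↦ C(x)`. -/
def IsTopNode (Cx : V → MaxClique G) : Prop :=
  ∀ (v : V) (C : MaxClique G), v ∈ fC T C ↔ C = Cx v

variable {Cx : V → MaxClique G}

lemma IsTopNode.mem (hCx : T.IsTopNode Cx) (v : V) : v ∈ (Cx v).1 :=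
  fC_subset _ ((hCx v (Cx v)).2 rfl)

lemma IsTopNode.eq_root_of_mem_parent (hCx : T.IsTopNode Cx) {v : V}
    (h : v ∈ (T.parent (Cx v)).1) : Cx v = T.root := by
  by_contra hroot
  have hv := (hCx v (Cx v)).2 rfl
  rw [fC, if_neg hroot] at hv
  exact hv.2 h

lemma IsTopNode.isAnc_of_mem (hCx : T.IsTopNode Cx) {v : V} {C : MaxClique G} (hv : v ∈ C.1) :
    IsAnc T (Cx v) C := by
  have hreach := (T.vertex_subtree v).preconnected ⟨Cx v, hCx.mem v⟩ ⟨C, hv⟩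
  rw [SimpleGraph.reachable_iff_reflTransGen] at hreach
  change IsAnc T (Cx v) (Subtype.val (⟨C, hv⟩ : {C : MaxClique G | v ∈ C.1}))
  generalize (⟨C, hv⟩ : {C : MaxClique G | v ∈ C.1}) = c at hreach ⊢
  induction hreach with
  | refl => exact IsAnc.refl T _
  | @tail a c _ hac ih =>
    obtain ⟨-, hpar | hpar⟩ : a.1 ≠ c.1 ∧ (T.parent a.1 = c.1 ∨ T.parent c.1 = a.1) := hac
    · rw [← hpar]
      rcases ih.eq_or_isAnc_parent with heq | h
      · have hvc : v ∈ (T.parent (Cx v)).1 := by rw [heq, hpar]; exact c.2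
        rw [← heq, hCx.eq_root_of_mem_parent hvc, T.parent_root]
        exact IsAnc.refl T _
      · exact h
    · exact ih.trans (hpar ▸ IsAnc.parent T c.1)

lemma IsTopNode.mem_parent (hCx : T.IsTopNode Cx) {v : V} {C : MaxClique G} (hv : v ∈ C.1)
    (h : IsAnc T (Cx v) (T.parent C)) : v ∈ (T.parent C).1 := by
  by_contra hvp
  have hroot : C ≠ T.root := by
    rintro rfl
    rw [T.parent_root] at hvp
    exact hvp hv
  have hC : C = Cx v := by
    rw [← hCx, fC, if_neg hroot]
    exact ⟨hv, hvp⟩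
  subst hC
  exact hvp (IsAnc.antisymm h (IsAnc.parent T _) ▸ hv)

lemma IsTopNode.mem_of_isAnc (hCx : T.IsTopNode Cx) {v : V} {A C : MaxClique G} (hv : v ∈ C.1)
    (hAC : IsAnc T A C) (hvA : IsAnc T (Cx v) A) : v ∈ A.1 := by
  obtain ⟨n, rfl⟩ := hAC
  induction n generalizing C with
  | zero => exact hv
  | succ n ih =>
    rw [Function.iterate_succ_apply] at hvA ⊢
    exact ih (hCx.mem_parent hv (hvA.trans ⟨n, rfl⟩)) hvA

lemma IsTopNode.mem_closedNbhd (hCx : T.IsTopNode Cx) {u z : V} (hz : z ∈ (Cx u).1) :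
    z ∈ closedNbhd G u := by
  by_cases hzu : z = u
  · rw [hzu]
    exact Set.mem_insert u _
  · exact Set.mem_insert_of_mem _ ((Cx u).2.1 (hCx.mem u) hz (Ne.symm hzu))

lemma IsTopNode.isAnc_total_of_mem_closedNbhd (hCx : T.IsTopNode Cx) {d z : V}
    (h : z ∈ closedNbhd G d) : IsAnc T (Cx d) (Cx z) ∨ IsAnc T (Cx z) (Cx d) := by
  obtain ⟨C, hd, hz⟩ := exists_maxClique_mem_of_mem_closedNbhd h
  exact (hCx.isAnc_of_mem hd).total (hCx.isAnc_of_mem hz)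

lemma IsTopNode.mem_of_mem_closedNbhd_of_isAnc (hCx : T.IsTopNode Cx) {d z : V}
    (h : z ∈ closedNbhd G d) (hzd : IsAnc T (Cx z) (Cx d)) : z ∈ (Cx d).1 := by
  obtain ⟨C, hd, hz⟩ := exists_maxClique_mem_of_mem_closedNbhd h
  exact hCx.mem_of_isAnc hz (hCx.isAnc_of_mem hd) hzd

lemma IsTopNode.mem_union_upS_of_isAnc (hCx : T.IsTopNode Cx) {a z : V}
    (h : IsAnc T (Cx a) (Cx z)) : a ∈ (Cx z).1 ∪ UpS T Cx {z} := by
  by_cases heq : Cx a = Cx z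
  · exact Or.inl (heq ▸ hCx.mem a)
  · exact Or.inr ⟨z, rfl, h, heq⟩

variable {S : Set V}

lemma exists_mem_topAC_isAnc {d : V} (hd : d ∈ S) :
    ∃ a ∈ topAC T Cx S, IsAnc T (Cx a) (Cx d) := by
  obtain ⟨a, ⟨ha, had⟩, hmin⟩ :=
    (InvImage.wf (fun u => T.depth (Cx u)) wellFounded_lt).has_min
      {u ∈ S | IsAnc T (Cx u) (Cx d)} ⟨d, hd, IsAnc.refl T _⟩
  refine ⟨a, ⟨ha, fun u hu hua => ?_⟩, had⟩
  by_contra hne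
  exact hmin u ⟨hu, hua.trans had⟩ (depth_lt_of_isAnc_of_ne hua hne)

lemma eq_of_mem_topAC_of_isAnc {a u : V} {W : MaxClique G} (ha : a ∈ topAC T Cx S) (hu : u ∈ S)
    (huW : IsAnc T (Cx u) W) (hWa : IsAnc T W (Cx a)) : W = Cx a := by
  have hua : Cx u = Cx a := ha.2 u hu (huW.trans hWa)
  exact hWa.antisymm (hua ▸ huW)

lemma notMem_upS_singleton_of_mem_topAC {x y : V} (hy : y ∈ topAC T Cx S) (hx : x ∈ S) :
    x ∉ UpS T Cx {y} := by
  rintro ⟨_, rfl, hxy, hne⟩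
  exact hne (hy.2 x hx hxy)

variable {D : Set V}

lemma IsTopNode.topAC_inter_nonempty (hCx : T.IsTopNode Cx) (hD : IsDomSet G D) {z : V}
    (hz : z ∉ UpS T Cx (topAC T Cx D)) :
    (topAC T Cx D ∩ ((Cx z).1 ∪ UpS T Cx {z})).Nonempty := by
  obtain ⟨d, hd, hzd⟩ := hD.exists_mem_closedNbhd z
  obtain ⟨a, ha, had⟩ := exists_mem_topAC_isAnc hd
  suffices haz : IsAnc T (Cx a) (Cx z) from ⟨a, ha, hCx.mem_union_upS_of_isAnc haz⟩
  rcases hCx.isAnc_total_of_mem_closedNbhd hzd with hdz | hzd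
  · exact had.trans hdz
  rcases had.total hzd with haz | hza
  · exact haz
  by_cases heq : Cx z = Cx a
  · exact heq ▸ IsAnc.refl T _
  · exact absurd ⟨a, ha, hza, heq⟩ hz

lemma IsTopNode.upS_topAC_subset_closedNbhdSet (hCx : T.IsTopNode Cx) (hD : IsDomSet G D) :
    UpS T Cx (topAC T Cx D) ⊆ closedNbhdSet G (topAC T Cx D) := by
  rintro z ⟨a, ha, hza, hne⟩
  have not_above : ∀ u ∈ D, ¬ IsAnc T (Cx u) (Cx z) := fun u hu huz =>
    hne (eq_of_mem_topAC_of_isAnc ha hu huz hza)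
  obtain ⟨d₀, hd₀, hzd₀⟩ := hD.exists_mem_closedNbhd z
  -- a highest dominator of `z` is a highest element of `D`
  obtain ⟨d, ⟨⟨hd, hzd⟩, hdtop⟩, -⟩ :=
    exists_mem_topAC_isAnc (S := {d ∈ D | z ∈ closedNbhd G d}) (Cx := Cx) ⟨hd₀, hzd₀⟩
  have hzd' : IsAnc T (Cx z) (Cx d) :=
    (hCx.isAnc_total_of_mem_closedNbhd hzd).resolve_left (not_above d hd)
  have hz_mem : z ∈ (Cx d).1 := hCx.mem_of_mem_closedNbhd_of_isAnc hzd hzd'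
  refine Set.mem_biUnion (⟨hd, fun u hu hud => ?_⟩ : d ∈ topAC T Cx D) hzd
  have hzu : IsAnc T (Cx z) (Cx u) := (hud.total hzd').resolve_left (not_above u hu)
  exact hdtop u ⟨hu, hCx.mem_closedNbhd (hCx.mem_of_isAnc hz_mem hud hzu)⟩ hud

end CliqueTree

theorem stmt10_general {V : Type*} (G : SimpleGraph V) (T : CliqueTree G)
    (Cx : V → MaxClique G) (hCx : ∀ (v : V) (C : MaxClique G), v ∈ fC T C ↔ C = Cx v)
    (D : Set V) (hD : IsMinDomSet G D) :
    (∀ x ∈ topAC T Cx D, ∀ y ∈ topAC T Cx D, x ≠ y →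
        x ∉ UpS T Cx {y} ∧ y ∉ UpS T Cx {x}) ∧
    (∀ z : V, z ∉ UpS T Cx (topAC T Cx D) →
        (topAC T Cx D ∩ ((Cx z).1 ∪ UpS T Cx {z})).Nonempty) ∧
    UpS T Cx (topAC T Cx D) ⊆ closedNbhdSet G (topAC T Cx D) := by
  have hTop : T.IsTopNode Cx := hCx
  refine ⟨fun x hx y hy _ => ?_, fun z hz => hTop.topAC_inter_nonempty hD.1 hz,
    hTop.upS_topAC_subset_closedNbhdSet hD.1⟩
  exact ⟨CliqueTree.notMem_upS_singleton_of_mem_topAC hy hx.1,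
    CliqueTree.notMem_upS_singleton_of_mem_topAC hx hy.1⟩

/-- For a minimal dominating set `D`: (i) distinct `x, y ∈ A(D)` satisfy
`x ∉ Up({y})` and `y ∉ Up({x})` (the nodes `C(x)`, `C(y)` are incomparable);
(ii) every `z ∉ Up(A(D))` satisfies `A(D) ∩ (C(z) ∪ Up({z})) ≠ ∅`;
(iii) `A(D)` dominates `Up(A(D))`. -/
theorem stmt10 {V : Type*} [Fintype V] (G : SimpleGraph V) (T : CliqueTree G)
    (Cx : V → MaxClique G) (hCx : ∀ (v : V) (C : MaxClique G), v ∈ fC T C ↔ C = Cx v)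
    (D : Set V) (hD : IsMinDomSet G D) :
    (∀ x ∈ topAC T Cx D, ∀ y ∈ topAC T Cx D, x ≠ y →
        x ∉ UpS T Cx {y} ∧ y ∉ UpS T Cx {x}) ∧
    (∀ z : V, z ∉ UpS T Cx (topAC T Cx D) →
        (topAC T Cx D ∩ ((Cx z).1 ∪ UpS T Cx {z})).Nonempty) ∧
    UpS T Cx (topAC T Cx D) ⊆ closedNbhdSet G (topAC T Cx D) :=
  stmt10_general G T Cx hCx D hD
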